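/- arXiv:1401.4410 — 2 statements merged into one kernel-verified Lean document; each statement's English description precedes it below -/
import Mathlib

section
/- Suppose complex-valued differentiable functions f, ψ, φ of a real variable t satisfy, for a fixed nonzero complex number λ and differentiable complex-valued functions u, w: i·f' = (λ + e^{iu}/(16λ))ψ + (λ + e^{-iu}/(16λ))φ, i·ψ' = (w/2)ψ + 2(λ + e^{-iu}/(16λ))f, i·φ' = -(w/2)φ + 2(λ + e^{iu}/(16λ))f. Then the quantity f(t)² - ψ(t)φ(t) is constant in t. -/
open Complex

theorem conservation_law (f ψ φ u w : ℝ → ℂ) (lam : ℂ) (hlam : lam ≠ 0)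
    (hf : Differentiable ℝ f) (hψ : Differentiable ℝ ψ) (hφ : Differentiable ℝ φ)
    (hu : Differentiable ℝ u) (hw : Differentiable ℝ w)
    (h1 : ∀ t, I * deriv f t =
      (lam + exp (I * u t) / (16 * lam)) * ψ t + (lam + exp (-I * u t) / (16 * lam)) * φ t)
    (h2 : ∀ t, I * deriv ψ t =
      (w t / 2) * ψ t + 2 * (lam + exp (-I * u t) / (16 * lam)) * f t)
    (h3 : ∀ t, I * deriv φ t =
      -(w t / 2) * φ t + 2 * (lam + exp (I * u t) / (16 * lam)) * f t) :
    ∀ t s : ℝ, f t ^ 2 - ψ t * φ t = f s ^ 2 - ψ s * φ s := by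
  have key : ∀ t : ℝ, deriv (fun t => f t ^ 2 - ψ t * φ t) t = 0 := by
    intro t
    have hd : deriv (fun t => f t ^ 2 - ψ t * φ t) t
        = 2 * f t * deriv f t - (deriv ψ t * φ t + ψ t * deriv φ t) := by
      have hab : HasDerivAt (fun t => f t ^ 2 - ψ t * φ t)
          ((deriv f t * f t + f t * deriv f t)
            - (deriv ψ t * φ t + ψ t * deriv φ t)) t := by
        simp only [pow_two]
        exact ((hf t).hasDerivAt.mul (hf t).hasDerivAt).sub
          ((hψ t).hasDerivAt.mul (hφ t).hasDerivAt)
      rw [hab.deriv]; ring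
    have hI : I * deriv (fun t => f t ^ 2 - ψ t * φ t) t = 0 := by
      rw [hd]
      have e1 := h1 t; have e2 := h2 t; have e3 := h3 t
      linear_combination 2 * f t * e1 - φ t * e2 - ψ t * e3
    have := mul_eq_zero.mp hI
    rcases this with h | h
    · exact absurd h I_ne_zero
    · exact h
  intro t s
  exact is_const_of_deriv_eq_zero (((hf.pow 2).sub (hψ.mul hφ))) key t s
end

section
/- Let P : ℂ → ℂ be a polynomial with real coefficients such that P(λ) > 0 for all real λ. Then there exists a polynomial Q with complex coefficients, all of whose roots lie in the closed upper half-plane, such that P(λ) = Q(λ) · conj(Q(conj λ)) for all complex λ; in particular |Q(λ)|² = P(λ) for real λ. -/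
open Complex Polynomial
open scoped ComplexConjugate

/-!
Over `ℂ`, a real polynomial `P` without real roots has its non-real roots in conjugate pairs, so
`P` is divisible by the real quadratic `(X - z) (X - conj z)` for some root `z` in the upper
half-plane. Since that quadratic is nonnegative on `ℝ`, the quotient is again positive on `ℝ`, and
induction on the degree peels off one factor `X - z` at a time; the leading coefficient, a
positive constant, contributes its square root.
-/

theorem Polynomial.eval_map_conj (Q : ℂ[X]) (z : ℂ) :
    (Q.map (starRingEnd ℂ)).eval z = conj (Q.eval (conj z)) := by
  rw [eval_map, ← eval₂_hom, conj_conj]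

theorem Polynomial.aeval_ofReal_complex (P : ℝ[X]) (x : ℝ) :
    aeval (x : ℂ) P = ((P.eval x : ℝ) : ℂ) :=
  aeval_ofReal P x

theorem Polynomial.map_quadratic_conj_pair (z : ℂ) :
    (X ^ 2 - C (2 * z.re) * X + C (‖z‖ ^ 2) : ℝ[X]).map (algebraMap ℝ ℂ)
      = (X - C z) * (X - C (conj z)) := by
  have hmap : (X ^ 2 - C (2 * z.re) * X + C (‖z‖ ^ 2) : ℝ[X]).map (algebraMap ℝ ℂ)
      = X ^ 2 - C ((2 * z.re : ℝ) : ℂ) * X + C ((‖z‖ : ℂ) ^ 2) := by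
    simp
  rw [hmap, ← add_conj, ← mul_conj', map_add, map_mul]
  ring

theorem Polynomial.natDegree_quadratic_conj_pair (z : ℂ) :
    (X ^ 2 - C (2 * z.re) * X + C (‖z‖ ^ 2) : ℝ[X]).natDegree = 2 := by
  compute_degree!

theorem Polynomial.eval_quadratic_conj_pair_nonneg (z : ℂ) (x : ℝ) :
    0 ≤ (X ^ 2 - C (2 * z.re) * X + C (‖z‖ ^ 2) : ℝ[X]).eval x := by
  have hsq : (X ^ 2 - C (2 * z.re) * X + C (‖z‖ ^ 2) : ℝ[X]).eval x
      = (x - z.re) ^ 2 + z.im ^ 2 := by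
    simp only [eval_add, eval_sub, eval_mul, eval_pow, eval_X, eval_C, ← normSq_eq_norm_sq,
      normSq_apply]
    ring
  rw [hsq]
  positivity

theorem Polynomial.exists_aeval_eq_zero_im_pos {P : ℝ[X]} (hpos : ∀ x : ℝ, 0 < P.eval x)
    (hdeg : P.natDegree ≠ 0) : ∃ z : ℂ, 0 < z.im ∧ aeval z P = 0 := by
  obtain ⟨z, hz⟩ := IsAlgClosed.exists_aeval_eq_zero ℂ P
    fun h => hdeg (natDegree_eq_of_degree_eq_some h)
  have him : z.im ≠ 0 := by
    intro h
    rw [← re_add_im z, h, ofReal_zero, zero_mul, add_zero, aeval_ofReal_complex] at hz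
    exact (hpos z.re).ne' (by exact_mod_cast hz)
  rcases him.lt_or_gt with h | h
  · exact ⟨conj z, by simpa using h, by rw [aeval_conj, hz, map_zero]⟩
  · exact ⟨z, h, hz⟩

/-- `Q.map conj` is the polynomial `λ ↦ conj (Q (conj λ))`, so `Q` plays the role of `P⁺`. -/
def IsSpectralFactor (P : ℝ[X]) (Q : ℂ[X]) : Prop :=
  (∀ z : ℂ, Q.IsRoot z → 0 ≤ z.im) ∧ P.map (algebraMap ℝ ℂ) = Q * Q.map (starRingEnd ℂ)

theorem IsSpectralFactor.mul {P₁ P₂ : ℝ[X]} {Q₁ Q₂ : ℂ[X]} (h₁ : IsSpectralFactor P₁ Q₁)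
    (h₂ : IsSpectralFactor P₂ Q₂) : IsSpectralFactor (P₁ * P₂) (Q₁ * Q₂) := by
  refine ⟨fun z hz => (root_mul.1 hz).elim (h₁.1 z) (h₂.1 z), ?_⟩
  rw [Polynomial.map_mul, Polynomial.map_mul, h₁.2, h₂.2]
  ring

theorem isSpectralFactor_C {c : ℝ} (hc : 0 < c) : IsSpectralFactor (C c) (C (√c : ℂ)) := by
  refine ⟨fun z hz => absurd hz (by simpa using (Real.sqrt_pos.2 hc).ne'), ?_⟩
  rw [map_C, map_C, ← C_mul, conj_ofReal, ← ofReal_mul, Real.mul_self_sqrt hc.le]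
  rfl

theorem isSpectralFactor_quadratic_conj_pair {z : ℂ} (hz : 0 ≤ z.im) :
    IsSpectralFactor (X ^ 2 - C (2 * z.re) * X + C (‖z‖ ^ 2)) (X - C z) := by
  refine ⟨fun w hw => root_X_sub_C.1 hw ▸ hz, ?_⟩
  rw [map_quadratic_conj_pair, Polynomial.map_sub, map_X, map_C]

theorem exists_isSpectralFactor_of_forall_eval_pos {P : ℝ[X]} (hpos : ∀ x : ℝ, 0 < P.eval x) :
    ∃ Q : ℂ[X], IsSpectralFactor P Q := by
  induction hn : P.natDegree using Nat.strong_induction_on generalizing P with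
  | _ n ih =>
  rcases eq_or_ne P.natDegree 0 with h0 | h0
  · rw [eq_C_of_natDegree_eq_zero h0] at hpos ⊢
    exact ⟨_, isSpectralFactor_C (by simpa using hpos 0)⟩
  obtain ⟨z, hz, hroot⟩ := exists_aeval_eq_zero_im_pos hpos h0
  obtain ⟨R, rfl⟩ := quadratic_dvd_of_aeval_eq_zero_im_ne_zero P hroot hz.ne'
  have hRpos (x : ℝ) : 0 < R.eval x :=
    pos_of_mul_pos_right (by simpa using hpos x) (eval_quadratic_conj_pair_nonneg z x)
  have hR0 : R ≠ 0 := fun h => by simpa [h] using hRpos 0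
  have hlt : R.natDegree < n := by
    have hq := natDegree_quadratic_conj_pair z
    rw [← hn, natDegree_mul (ne_zero_of_natDegree_gt (hq ▸ two_pos)) hR0, hq]
    omega
  obtain ⟨Q, hQ⟩ := ih _ hlt hRpos rfl
  exact ⟨_, (isSpectralFactor_quadratic_conj_pair hz.le).mul hQ⟩

theorem spectral_factorization (P : Polynomial ℝ) (hpos : ∀ x : ℝ, 0 < P.eval x) :
    ∃ Q : Polynomial ℂ,
      (∀ z : ℂ, Q.IsRoot z → 0 ≤ z.im) ∧
      (∀ z : ℂ, (P.map (algebraMap ℝ ℂ)).eval z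
          = Q.eval z * (starRingEnd ℂ) (Q.eval ((starRingEnd ℂ) z))) ∧
      (∀ x : ℝ, ‖Q.eval (x : ℂ)‖ ^ 2 = P.eval x) := by
  obtain ⟨Q, hroots, hfac⟩ := exists_isSpectralFactor_of_forall_eval_pos hpos
  have heval (z : ℂ) : (P.map (algebraMap ℝ ℂ)).eval z = Q.eval z * conj (Q.eval (conj z)) := by
    rw [hfac, eval_mul, eval_map_conj]
  refine ⟨Q, hroots, heval, fun x => ?_⟩
  have hx := heval x
  rw [conj_ofReal, mul_conj', eval_map_algebraMap, aeval_ofReal_complex] at hx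
  exact_mod_cast hx.symm
end
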